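/- arXiv:1801.03988 — 6 statements merged into one kernel-verified Lean document; each statement's English description precedes it below -/
import Mathlib

section
/- If A is a K-ergodic map, then its adjoint A* is K*-ergodic; moreover a stationary vector and a dual stationary vector of A* are given by a dual stationary vector and a stationary vector of A, respectively. -/
open Filter Topology RealInnerProductSpace

variable {V : Type*} [NormedAddCommGroup V] [InnerProductSpace ℝ V] [FiniteDimensional ℝ V]

/-- The dual cone of a set `K`. -/
def dualSet (K : Set V) : Set V := {y | ∀ x ∈ K, 0 ≤ ⟪y, x⟫}

/-- The spectral radius via the Gelfand formula. -/
noncomputable def specRad (A : V →L[ℝ] V) : ℝ :=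
  Filter.limsup (fun n : ℕ => ‖A ^ n‖ ^ ((n : ℝ)⁻¹)) Filter.atTop

/-- `A` is `K`-ergodic with stationary vector `x₀` and dual stationary vector `y₀`. -/
def IsErgodicWith (K : Set V) (A : V →L[ℝ] V) (x₀ y₀ : V) : Prop :=
  0 < specRad A ∧ x₀ ∈ K ∧ y₀ ∈ dualSet K ∧ ⟪y₀, x₀⟫ = 1 ∧
    ∀ x : V, Tendsto
      (fun n : ℕ => (n : ℝ)⁻¹ • ∑ k ∈ Finset.range n, (((specRad A)⁻¹ • A) ^ k) x)
      atTop (𝓝 (⟪y₀, x⟫ • x₀))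

/-- `A` is `K`-ergodic. -/
def IsErgodic (K : Set V) (A : V →L[ℝ] V) : Prop := ∃ x₀ y₀, IsErgodicWith K A x₀ y₀

/-- `A` is `K`-mixing with stationary vector `x₀` and dual stationary vector `y₀`. -/
def IsMixingWith (K : Set V) (A : V →L[ℝ] V) (x₀ y₀ : V) : Prop :=
  0 < specRad A ∧ x₀ ∈ K ∧ y₀ ∈ dualSet K ∧ ⟪y₀, x₀⟫ = 1 ∧
    ∀ x : V, Tendsto (fun n : ℕ => (((specRad A)⁻¹ • A) ^ n) x) atTop (𝓝 (⟪y₀, x⟫ • x₀))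

/-- `A` is `K`-mixing. -/
def IsMixing (K : Set V) (A : V →L[ℝ] V) : Prop := ∃ x₀ y₀, IsMixingWith K A x₀ y₀

/-!
Ergodicity of `A` says that the Cesàro means of `r⁻¹ A` converge pointwise to the rank-one
operator `x ↦ ⟪y₀, x⟫ x₀`. Since `‖(A*)ⁿ‖ = ‖Aⁿ‖`, the adjoint has the same spectral radius, and
the Cesàro means of `r⁻¹ A*` are the adjoints of those of `r⁻¹ A`. In finite dimension pointwise
convergence of operators passes to adjoints (test against an orthonormal basis), and the adjoint
of the rank-one limit is `x ↦ ⟪x₀, x⟫ y₀`.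
-/

section

variable {𝕜 E F : Type*} [RCLike 𝕜] [NormedAddCommGroup E] [InnerProductSpace 𝕜 E]
  [NormedAddCommGroup F] [InnerProductSpace 𝕜 F]

theorem tendsto_of_forall_tendsto_inner [FiniteDimensional 𝕜 E] {α : Type*} {l : Filter α}
    {f : α → E} {v : E} (h : ∀ z, Tendsto (fun a => inner 𝕜 z (f a)) l (𝓝 (inner 𝕜 z v))) :
    Tendsto f l (𝓝 v) := by
  let b := stdOrthonormalBasis 𝕜 E
  rw [← b.sum_repr' v, funext fun a => (b.sum_repr' (f a)).symm]
  exact tendsto_finsetSum _ fun i _ => (h (b i)).smul_const (b i)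

theorem tendsto_adjoint_apply_of_tendsto_apply [FiniteDimensional 𝕜 E] [CompleteSpace E]
    [CompleteSpace F] {α : Type*} {l : Filter α} {T : α → E →L[𝕜] F} {S : E →L[𝕜] F}
    (h : ∀ x, Tendsto (fun a => T a x) l (𝓝 (S x))) (y : F) :
    Tendsto (fun a => ContinuousLinearMap.adjoint (T a) y) l
      (𝓝 (ContinuousLinearMap.adjoint S y)) :=
  tendsto_of_forall_tendsto_inner (𝕜 := 𝕜) fun z => by
    simpa only [ContinuousLinearMap.adjoint_inner_right] using
      (h z).inner (𝕜 := 𝕜) tendsto_const_nhds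

end

section

variable {E : Type*} [NormedAddCommGroup E] [InnerProductSpace ℝ E]

theorem subset_dualSet_dualSet (K : Set E) : K ⊆ dualSet (dualSet K) :=
  fun x hx y hy => real_inner_comm x y ▸ hy x hx

noncomputable def cesaroMean (T : E →L[ℝ] E) (n : ℕ) : E →L[ℝ] E :=
  (n : ℝ)⁻¹ • ∑ k ∈ Finset.range n, T ^ k

theorem cesaroMean_apply (T : E →L[ℝ] E) (n : ℕ) (x : E) :
    cesaroMean T n x = (n : ℝ)⁻¹ • ∑ k ∈ Finset.range n, (T ^ k) x := by
  simp [cesaroMean]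

variable [CompleteSpace E]

theorem specRad_adjoint (A : E →L[ℝ] E) :
    specRad (ContinuousLinearMap.adjoint A) = specRad A := by
  unfold specRad
  congr with n
  rw [← ContinuousLinearMap.star_eq_adjoint, ← star_pow, ContinuousLinearMap.star_eq_adjoint,
    LinearIsometryEquiv.norm_map]

theorem adjoint_smul_real (c : ℝ) (A : E →L[ℝ] E) :
    ContinuousLinearMap.adjoint (c • A) = c • ContinuousLinearMap.adjoint A := by
  rw [← ContinuousLinearMap.star_eq_adjoint, star_smul, star_trivial c,
    ContinuousLinearMap.star_eq_adjoint]

theorem adjoint_cesaroMean (T : E →L[ℝ] E) (n : ℕ) :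
    ContinuousLinearMap.adjoint (cesaroMean T n) =
      cesaroMean (ContinuousLinearMap.adjoint T) n := by
  rw [cesaroMean, cesaroMean, adjoint_smul_real, map_sum]
  simp only [← ContinuousLinearMap.star_eq_adjoint, star_pow]

end

theorem stmt_2_general (K : Set V) (A : V →L[ℝ] V) (x₀ y₀ : V) (herg : IsErgodicWith K A x₀ y₀) :
    IsErgodicWith (dualSet K) (ContinuousLinearMap.adjoint A) y₀ x₀ := by
  obtain ⟨hr, hx₀, hy₀, hxy, hmean⟩ := herg
  refine ⟨specRad_adjoint A ▸ hr, hy₀, subset_dualSet_dualSet K hx₀, real_inner_comm x₀ y₀ ▸ hxy,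
    fun x => ?_⟩
  have h := tendsto_adjoint_apply_of_tendsto_apply (S := InnerProductSpace.rankOne ℝ x₀ y₀)
    (T := cesaroMean ((specRad A)⁻¹ • A))
    (by simpa only [cesaroMean_apply, InnerProductSpace.rankOne_apply] using hmean) x
  simpa only [adjoint_cesaroMean, adjoint_smul_real, specRad_adjoint, cesaroMean_apply,
    InnerProductSpace.adjoint_rankOne, InnerProductSpace.rankOne_apply] using h

theorem stmt_2 (K : Set V) (hKcl : IsClosed K) (hKconv : Convex ℝ K)
    (hKcone : ∀ c : ℝ, 0 ≤ c → ∀ x ∈ K, c • x ∈ K)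
    (hKint : (interior K).Nonempty) (hKpt : K ∩ (-K) = {(0 : V)})
    (A : V →L[ℝ] V) (hA : ∀ x ∈ K, A x ∈ K)
    (x₀ y₀ : V) (herg : IsErgodicWith K A x₀ y₀) :
    IsErgodicWith (dualSet K) (ContinuousLinearMap.adjoint A) y₀ x₀ :=
  stmt_2_general K A x₀ y₀ herg
end

section
/- If A is a K-ergodic map, then any stationary vector x₀ and dual stationary vector y₀ of A are eigenvectors of A and A* respectively, both associated with the eigenvalue r(A). -/
/-!
Let `B = r(A)⁻¹ A`, let `Mₙ x` be the Cesàro averages of `Bᵏ x` and `P x = ⟪y₀, x⟫ x₀` their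
limit. Since `B` commutes with `Mₙ`, `B (P x) = P (B x)`. Moreover `Mₙ (B x) - Mₙ x = (Bⁿ x - x) / n`
tends to `0`, because `Bⁿ x / n` is essentially a difference of consecutive Cesàro averages; so
`P (B x) = P x`. Hence `B P = P = P B`: at `x₀` the first gives `B x₀ = x₀`, and the second says
`⟪y₀, B x⟫ = ⟪y₀, x⟫` for all `x`, i.e. `B* y₀ = y₀`. Finally `⟪y₀, x₀⟫ = 1` forces `x₀, y₀ ≠ 0`.
-/
open Filter Topology RealInnerProductSpace

variable {V : Type*} [NormedAddCommGroup V] [InnerProductSpace ℝ V] [FiniteDimensional ℝ V]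

section Cesaro

variable {E : Type*} [AddCommGroup E] [Module ℝ E] [TopologicalSpace E]

noncomputable def cesaroAvg (T : E →L[ℝ] E) (n : ℕ) (x : E) : E :=
  (n : ℝ)⁻¹ • ∑ k ∈ Finset.range n, (T ^ k) x

variable (T : E →L[ℝ] E)

lemma pow_apply_map (k : ℕ) (x : E) : (T ^ k) (T x) = (T ^ (k + 1)) x := by
  rw [pow_succ, mul_apply_eq_comp]

lemma cesaroAvg_apply_map (n : ℕ) (x : E) : cesaroAvg T n (T x) = T (cesaroAvg T n x) := by
  simp only [cesaroAvg, map_smul, map_sum, pow_apply_map, pow_succ', mul_apply_eq_comp]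

lemma cesaroAvg_apply_map_sub (n : ℕ) (x : E) :
    cesaroAvg T n (T x) - cesaroAvg T n x = (n : ℝ)⁻¹ • ((T ^ n) x - x) := by
  simp only [cesaroAvg, ← smul_sub, ← Finset.sum_sub_distrib, pow_apply_map,
    Finset.sum_range_sub (fun k => (T ^ k) x), pow_zero, one_apply_eq_self]

variable [IsTopologicalAddGroup E] [ContinuousSMul ℝ E]

lemma tendsto_inv_smul_zero_of_tendsto_cesaro {a : ℕ → E} {L : E}
    (h : Tendsto (fun n : ℕ => (n : ℝ)⁻¹ • ∑ k ∈ Finset.range n, a k) atTop (𝓝 L)) :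
    Tendsto (fun n : ℕ => (n : ℝ)⁻¹ • a n) atTop (𝓝 0) := by
  have hratio : Tendsto (fun n : ℕ => ((n : ℝ) + 1) / n) atTop (𝓝 1) := by
    simpa using (tendsto_natCast_div_add_atTop (1 : ℝ)).inv₀ one_ne_zero
  have := (hratio.smul (h.comp (tendsto_add_atTop_nat 1))).sub h
  rw [one_smul, sub_self] at this
  refine this.congr fun n => ?_
  have hn : ((n : ℝ) + 1) / n * ((n + 1 : ℕ) : ℝ)⁻¹ = (n : ℝ)⁻¹ := by
    push_cast
    field_simp -- also at `n = 0`, where both sides are `0`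
  simp only [Function.comp_apply, smul_smul, hn, Finset.sum_range_succ, smul_add,
    add_sub_cancel_left]

variable [T2Space E] {T} {Q : E → E}
  (hQ : ∀ x, Tendsto (fun n => cesaroAvg T n x) atTop (𝓝 (Q x)))
include hQ

lemma limit_apply_map_eq_of_tendsto_cesaroAvg (x : E) : Q (T x) = Q x := by
  have hdiff : Tendsto (fun n : ℕ => (n : ℝ)⁻¹ • ((T ^ n) x - x)) atTop (𝓝 0) := by
    simpa only [smul_sub, zero_smul, sub_zero] using
      (tendsto_inv_smul_zero_of_tendsto_cesaro (hQ x)).sub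
        ((tendsto_inv_atTop_nhds_zero_nat (𝕜 := ℝ)).smul_const x)
  have := (hQ (T x)).sub (hQ x)
  simp only [cesaroAvg_apply_map_sub] at this
  exact sub_eq_zero.mp (tendsto_nhds_unique this hdiff)

lemma map_limit_eq_of_tendsto_cesaroAvg (x : E) : T (Q x) = Q x := by
  have := (T.continuous.tendsto _).comp (hQ x)
  simp only [Function.comp_def, ← cesaroAvg_apply_map] at this
  rw [tendsto_nhds_unique this (hQ (T x)), limit_apply_map_eq_of_tendsto_cesaroAvg hQ]

end Cesaro

theorem stmt_3_general (K : Set V) (A : V →L[ℝ] V) (x₀ y₀ : V) (herg : IsErgodicWith K A x₀ y₀) :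
    x₀ ≠ 0 ∧ A x₀ = specRad A • x₀ ∧
      y₀ ≠ 0 ∧ ContinuousLinearMap.adjoint A y₀ = specRad A • y₀ := by
  obtain ⟨hr, -, -, hinner, hlim⟩ := herg
  set B := (specRad A)⁻¹ • A
  have hx₀ : x₀ ≠ 0 := by rintro rfl; simp at hinner
  have hy₀ : y₀ ≠ 0 := by rintro rfl; simp at hinner
  have hBx₀ : B x₀ = x₀ := by
    simpa only [hinner, one_smul] using map_limit_eq_of_tendsto_cesaroAvg hlim x₀
  have hB'y₀ : ContinuousLinearMap.adjoint B y₀ = y₀ := by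
    refine ext_inner_right ℝ fun x => ?_
    rw [ContinuousLinearMap.adjoint_inner_left]
    exact smul_left_injective ℝ hx₀ (limit_apply_map_eq_of_tendsto_cesaroAvg hlim x)
  have hB' : ContinuousLinearMap.adjoint B = (specRad A)⁻¹ • ContinuousLinearMap.adjoint A := by
    simp [B]
  rw [hB', smul_apply] at hB'y₀
  exact ⟨hx₀, (inv_smul_eq_iff₀ hr.ne').mp hBx₀, hy₀, (inv_smul_eq_iff₀ hr.ne').mp hB'y₀⟩

theorem stmt_3 (K : Set V) (hKcl : IsClosed K) (hKconv : Convex ℝ K)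
    (hKcone : ∀ c : ℝ, 0 ≤ c → ∀ x ∈ K, c • x ∈ K)
    (hKint : (interior K).Nonempty) (hKpt : K ∩ (-K) = {(0 : V)})
    (A : V →L[ℝ] V) (hA : ∀ x ∈ K, A x ∈ K)
    (x₀ y₀ : V) (herg : IsErgodicWith K A x₀ y₀) :
    x₀ ≠ 0 ∧ A x₀ = specRad A • x₀ ∧
      y₀ ≠ 0 ∧ ContinuousLinearMap.adjoint A y₀ = specRad A • y₀ :=
  stmt_3_general K A x₀ y₀ herg
end

section
/- Let K₁, K₂ be closed convex cones with nonempty interior satisfying Kⱼ ∩ (−Kⱼ) = {0}, let K̃ be a closed convex cone with K₁⊗K₂ ⊆ K̃ ⊆ (K₁*⊗K₂*)*, let Aⱼ be Kⱼ-mixing for j = 1,2, and suppose A₁⊗A₂ is K̃-positive. Then A₁⊗A₂ is K̃-mixing, with stationary vector x₀¹⊗x₀² and dual stationary vector y₀¹⊗y₀², and r(A₁⊗A₂) = r(A₁)r(A₂). -/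
open Filter Topology RealInnerProductSpace

variable {V : Type*} [NormedAddCommGroup V] [InnerProductSpace ℝ V] [FiniteDimensional ℝ V]

variable {V₁ V₂ W : Type*}
  [NormedAddCommGroup V₁] [InnerProductSpace ℝ V₁] [FiniteDimensional ℝ V₁]
  [NormedAddCommGroup V₂] [InnerProductSpace ℝ V₂] [FiniteDimensional ℝ V₂]
  [NormedAddCommGroup W] [InnerProductSpace ℝ W] [FiniteDimensional ℝ W]

/-- The tensor product cone: finite sums of elementary tensors of cone elements,
where `tmul` is the (abstract) tensor-product bilinear map. -/
def tensorCone (tmul : V₁ →ₗ[ℝ] V₂ →ₗ[ℝ] W) (K₁ : Set V₁) (K₂ : Set V₂) : Set W :=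
  {z | ∃ (n : ℕ) (f : Fin n → V₁) (g : Fin n → V₂),
    (∀ i, f i ∈ K₁) ∧ (∀ i, g i ∈ K₂) ∧ z = ∑ i, tmul (f i) (g i)}

/-
Write `rⱼ = r(Aⱼ)`. Since `B` acts on elementary tensors as `A₁ ⊗ A₂`, the powers of `(r₁ r₂)⁻¹ B` act on
`a ⊗ b` as `(r₁⁻¹ A₁)ⁿ a ⊗ (r₂⁻¹ A₂)ⁿ b`, which converges to `⟪y₀¹, a⟫⟪y₀², b⟫ x₀¹ ⊗ x₀²`
because `⊗` is jointly continuous. Elementary tensors span `W`, so `((r₁ r₂)⁻¹ B)ⁿ` converges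
pointwise to the rank-one projection `⟪y₀¹ ⊗ y₀², ·⟫ x₀¹ ⊗ x₀²`. Pointwise convergence bounds
`‖((r₁ r₂)⁻¹ B)ⁿ‖` above (Banach–Steinhaus) and, at the fixed vector `x₀¹ ⊗ x₀²`, eventually
below by a positive constant; hence `‖Bⁿ‖^(1/n) → r₁ r₂` and `r(B) = r₁ r₂`.
-/

theorem tendsto_rpow_inv_natCast_of_eventually_mem_Icc {c : ℕ → ℝ} {lo hi : ℝ} (hlo : 0 < lo)
    (h : ∀ᶠ n in atTop, c n ∈ Set.Icc lo hi) :
    Tendsto (fun n : ℕ => c n ^ ((n : ℝ)⁻¹)) atTop (𝓝 1) := by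
  have hhi : 0 < hi := by
    obtain ⟨n, hn⟩ := h.exists
    exact hlo.trans_le (hn.1.trans hn.2)
  have tendsto_const_rpow {a : ℝ} (ha : 0 < a) :
      Tendsto (fun n : ℕ => a ^ ((n : ℝ)⁻¹)) atTop (𝓝 1) := by
    simpa [Function.comp_def] using
      (Real.continuousAt_const_rpow ha.ne').tendsto.comp tendsto_inv_atTop_nhds_zero_nat
  refine tendsto_of_tendsto_of_tendsto_of_le_of_le' (tendsto_const_rpow hlo)
    (tendsto_const_rpow hhi) ?_ ?_
  · exact h.mono fun n hn => Real.rpow_le_rpow hlo.le hn.1 (by positivity)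
  · exact h.mono fun n hn => Real.rpow_le_rpow (hlo.le.trans hn.1) hn.2 (by positivity)

theorem tendsto_apply_of_span_eq_top {R E F ι : Type*} [Semiring R] [AddCommMonoid E]
    [Module R E] [AddCommMonoid F] [Module R F] [TopologicalSpace F] [ContinuousAdd F]
    [ContinuousConstSMul R F] {l : Filter ι} {f : ι → E →ₗ[R] F}
    {g : E →ₗ[R] F} {s : Set E} (hs : Submodule.span R s = ⊤)
    (h : ∀ x ∈ s, Tendsto (fun i => f i x) l (𝓝 (g x))) (x : E) :
    Tendsto (fun i => f i x) l (𝓝 (g x)) := by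
  have hx : x ∈ Submodule.span R s := hs ▸ Submodule.mem_top
  induction hx using Submodule.span_induction with
  | mem x hx => exact h x hx
  | zero => simpa using tendsto_const_nhds
  | add x y _ _ hx hy => simpa using hx.add hy
  | smul c x _ hx => simpa using hx.const_smul c

theorem norm_pow_rpow_inv_eq {E : Type*} [NormedAddCommGroup E] [NormedSpace ℝ E]
    (A : E →L[ℝ] E) {r : ℝ} (hr : 0 < r) {n : ℕ} (hn : n ≠ 0) :
    ‖A ^ n‖ ^ ((n : ℝ)⁻¹) = r * ‖(r⁻¹ • A) ^ n‖ ^ ((n : ℝ)⁻¹) := by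
  have hnorm : ‖A ^ n‖ = r ^ n * ‖(r⁻¹ • A) ^ n‖ := by
    rw [smul_pow, norm_smul, Real.norm_eq_abs, abs_pow, abs_inv, abs_of_pos hr, ← mul_assoc,
      ← mul_pow, mul_inv_cancel₀ hr.ne', one_pow, one_mul]
  rw [hnorm, Real.mul_rpow (by positivity) (norm_nonneg _), ← Real.rpow_natCast,
    ← Real.rpow_mul hr.le, mul_inv_cancel₀ (Nat.cast_ne_zero.mpr hn), Real.rpow_one]

theorem specRad_eq_of_tendsto_pow_apply {A : V →L[ℝ] V} {r : ℝ} (hr : 0 < r) {L : V → V}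
    (hL : ∀ x, Tendsto (fun n : ℕ => ((r⁻¹ • A) ^ n) x) atTop (𝓝 (L x)))
    {x₀ : V} (hLx₀ : L x₀ ≠ 0) : specRad A = r := by
  obtain ⟨C, hC⟩ := banach_steinhaus (g := fun n : ℕ => (r⁻¹ • A) ^ n) fun x => by
    obtain ⟨C, hC⟩ := (hL x).norm.bddAbove_range
    exact ⟨C, fun n => hC ⟨n, rfl⟩⟩
  have hx₀ne : x₀ ≠ 0 := by
    rintro rfl
    exact hLx₀ (tendsto_nhds_unique (by simpa only [map_zero] using hL 0) tendsto_const_nhds)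
  have hnx₀ : 0 < ‖x₀‖ := norm_pos_iff.mpr hx₀ne
  have hlo : 0 < ‖L x₀‖ / 2 / ‖x₀‖ := by positivity
  have hbounds : ∀ᶠ n : ℕ in atTop, ‖(r⁻¹ • A) ^ n‖ ∈ Set.Icc (‖L x₀‖ / 2 / ‖x₀‖) C := by
    filter_upwards [(hL x₀).norm.eventually
      (eventually_gt_nhds (half_lt_self (norm_pos_iff.mpr hLx₀)))] with n hn
    refine ⟨(div_le_iff₀ hnx₀).mpr ?_, hC n⟩
    exact hn.le.trans (((r⁻¹ • A) ^ n).le_opNorm x₀)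
  have hlim : Tendsto (fun n : ℕ => ‖A ^ n‖ ^ ((n : ℝ)⁻¹)) atTop (𝓝 r) := by
    have := (tendsto_rpow_inv_natCast_of_eventually_mem_Icc hlo hbounds).const_mul r
    rw [mul_one] at this
    refine this.congr' ?_
    filter_upwards [eventually_ne_atTop 0] with n hn
    exact (norm_pow_rpow_inv_eq A hr hn).symm
  exact hlim.limsup_eq

section TensorProduct

variable {E₁ E₂ F : Type*}
  [NormedAddCommGroup E₁] [InnerProductSpace ℝ E₁]
  [NormedAddCommGroup E₂] [InnerProductSpace ℝ E₂]
  [NormedAddCommGroup F] [InnerProductSpace ℝ F]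
  (tmul : E₁ →ₗ[ℝ] E₂ →ₗ[ℝ] F)

theorem norm_tmul_eq_mul
    (hinner : ∀ (a c : E₁) (b d : E₂), ⟪tmul a b, tmul c d⟫ = ⟪a, c⟫ * ⟪b, d⟫)
    (a : E₁) (b : E₂) : ‖tmul a b‖ = ‖a‖ * ‖b‖ := by
  have h := hinner a a b b
  simp only [real_inner_self_eq_norm_sq] at h
  rw [← mul_pow] at h
  exact (pow_left_inj₀ (norm_nonneg _) (by positivity) two_ne_zero).mp h

theorem tendsto_tmul
    (hinner : ∀ (a c : E₁) (b d : E₂), ⟪tmul a b, tmul c d⟫ = ⟪a, c⟫ * ⟪b, d⟫)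
    {ι : Type*} {l : Filter ι} {u : ι → E₁} {v : ι → E₂} {a : E₁} {b : E₂}
    (hu : Tendsto u l (𝓝 a)) (hv : Tendsto v l (𝓝 b)) :
    Tendsto (fun i => tmul (u i) (v i)) l (𝓝 (tmul a b)) := by
  let T : E₁ →L[ℝ] E₂ →L[ℝ] F :=
    tmul.mkContinuous₂ 1 fun a b => by rw [norm_tmul_eq_mul tmul hinner, one_mul]
  exact (T.continuous₂.tendsto (a, b)).comp (hu.prodMk_nhds hv)

theorem pow_apply_tmul {A₁ : E₁ →L[ℝ] E₁} {A₂ : E₂ →L[ℝ] E₂} {B : F →L[ℝ] F}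
    (hB : ∀ a b, B (tmul a b) = tmul (A₁ a) (A₂ b)) (n : ℕ) (a : E₁) (b : E₂) :
    (B ^ n) (tmul a b) = tmul ((A₁ ^ n) a) ((A₂ ^ n) b) := by
  induction n with
  | zero => rfl
  | succ n ih =>
    simp only [pow_succ']
    exact (congrArg B ih).trans (hB _ _)

theorem tmul_mem_tensorCone {K₁ : Set E₁} {K₂ : Set E₂} {a : E₁} {b : E₂} (ha : a ∈ K₁)
    (hb : b ∈ K₂) : tmul a b ∈ tensorCone tmul K₁ K₂ :=
  ⟨1, fun _ => a, fun _ => b, fun _ => ha, fun _ => hb, by simp⟩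

theorem tendsto_pow_apply_of_tmul
    (hinner : ∀ (a c : E₁) (b d : E₂), ⟪tmul a b, tmul c d⟫ = ⟪a, c⟫ * ⟪b, d⟫)
    (hspan : Submodule.span ℝ {z : F | ∃ a b, z = tmul a b} = ⊤)
    {S₁ : E₁ →L[ℝ] E₁} {S₂ : E₂ →L[ℝ] E₂} {T : F →L[ℝ] F}
    (hT : ∀ a b, T (tmul a b) = tmul (S₁ a) (S₂ b)) {x₁ y₁ : E₁} {x₂ y₂ : E₂}
    (h₁ : ∀ a, Tendsto (fun n : ℕ => (S₁ ^ n) a) atTop (𝓝 (⟪y₁, a⟫ • x₁)))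
    (h₂ : ∀ b, Tendsto (fun n : ℕ => (S₂ ^ n) b) atTop (𝓝 (⟪y₂, b⟫ • x₂))) (z : F) :
    Tendsto (fun n : ℕ => (T ^ n) z) atTop (𝓝 (⟪tmul y₁ y₂, z⟫ • tmul x₁ x₂)) := by
  refine tendsto_apply_of_span_eq_top (f := fun n => ((T ^ n : F →L[ℝ] F) : F →ₗ[ℝ] F))
    (g := (innerₛₗ ℝ (tmul y₁ y₂)).smulRight (tmul x₁ x₂)) hspan ?_ z
  rintro _ ⟨a, b, rfl⟩
  have hlim : tmul (⟪y₁, a⟫ • x₁) (⟪y₂, b⟫ • x₂) = ⟪tmul y₁ y₂, tmul a b⟫ • tmul x₁ x₂ := by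
    rw [hinner, map_smul, map_smul, LinearMap.smul_apply, smul_smul, mul_comm ⟪y₂, b⟫]
  simp only [ContinuousLinearMap.coe_coe, pow_apply_tmul tmul hT, LinearMap.smulRight_apply,
    innerₛₗ_apply_apply, ← hlim]
  exact tendsto_tmul tmul hinner (h₁ a) (h₂ b)

end TensorProduct

theorem mem_dualSet_of_subset_dualSet {E : Type*} [NormedAddCommGroup E]
    [InnerProductSpace ℝ E] {K S : Set E} (hK : K ⊆ dualSet S) {y : E} (hy : y ∈ S) :
    y ∈ dualSet K :=
  fun x hx => real_inner_comm x y ▸ hK hx y hy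

theorem stmt_7_general (tmul : V₁ →ₗ[ℝ] V₂ →ₗ[ℝ] W)
    (hinner : ∀ (a c : V₁) (b d : V₂), ⟪tmul a b, tmul c d⟫ = ⟪a, c⟫ * ⟪b, d⟫)
    (hspan : Submodule.span ℝ {z : W | ∃ a b, z = tmul a b} = ⊤)
    (K₁ : Set V₁)
    (K₂ : Set V₂)
    (Kt : Set W)
    (hKt₁ : tensorCone tmul K₁ K₂ ⊆ Kt)
    (hKt₂ : Kt ⊆ dualSet (tensorCone tmul (dualSet K₁) (dualSet K₂)))
    (A₁ : V₁ →L[ℝ] V₁)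
    (A₂ : V₂ →L[ℝ] V₂)
    (x₀₁ y₀₁ : V₁) (hmix₁ : IsMixingWith K₁ A₁ x₀₁ y₀₁)
    (x₀₂ y₀₂ : V₂) (hmix₂ : IsMixingWith K₂ A₂ x₀₂ y₀₂)
    (B : W →L[ℝ] W) (hB : ∀ (a : V₁) (b : V₂), B (tmul a b) = tmul (A₁ a) (A₂ b)) :
    specRad B = specRad A₁ * specRad A₂ ∧
      IsMixingWith Kt B (tmul x₀₁ x₀₂) (tmul y₀₁ y₀₂) := by
  obtain ⟨hr₁, hx₁, hy₁, hyx₁, hlim₁⟩ := hmix₁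
  obtain ⟨hr₂, hx₂, hy₂, hyx₂, hlim₂⟩ := hmix₂
  have hyx : ⟪tmul y₀₁ y₀₂, tmul x₀₁ x₀₂⟫ = 1 := by rw [hinner, hyx₁, hyx₂, one_mul]
  have hscaled : ∀ a b, ((specRad A₁ * specRad A₂)⁻¹ • B) (tmul a b)
      = tmul (((specRad A₁)⁻¹ • A₁) a) (((specRad A₂)⁻¹ • A₂) b) := by
    intro a b
    simp only [smul_apply, hB, map_smul, LinearMap.smul_apply, smul_smul, mul_inv, mul_comm]
  have hx₀ : tmul x₀₁ x₀₂ ≠ 0 := fun h => by simp [h] at hyx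
  have hlim := tendsto_pow_apply_of_tmul tmul hinner hspan hscaled hlim₁ hlim₂
  have hrB : specRad B = specRad A₁ * specRad A₂ :=
    specRad_eq_of_tendsto_pow_apply (mul_pos hr₁ hr₂) hlim (x₀ := tmul x₀₁ x₀₂)
      (by rwa [hyx, one_smul])
  refine ⟨hrB, hrB ▸ mul_pos hr₁ hr₂, hKt₁ (tmul_mem_tensorCone tmul hx₁ hx₂),
    mem_dualSet_of_subset_dualSet hKt₂ (tmul_mem_tensorCone tmul hy₁ hy₂), hyx, by rwa [hrB]⟩

theorem stmt_7 (tmul : V₁ →ₗ[ℝ] V₂ →ₗ[ℝ] W)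
    (hinner : ∀ (a c : V₁) (b d : V₂), ⟪tmul a b, tmul c d⟫ = ⟪a, c⟫ * ⟪b, d⟫)
    (hspan : Submodule.span ℝ {z : W | ∃ a b, z = tmul a b} = ⊤)
    (K₁ : Set V₁) (hK₁cl : IsClosed K₁) (hK₁conv : Convex ℝ K₁)
    (hK₁cone : ∀ c : ℝ, 0 ≤ c → ∀ x ∈ K₁, c • x ∈ K₁)
    (hK₁int : (interior K₁).Nonempty) (hK₁pt : K₁ ∩ (-K₁) = {(0 : V₁)})
    (K₂ : Set V₂) (hK₂cl : IsClosed K₂) (hK₂conv : Convex ℝ K₂)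
    (hK₂cone : ∀ c : ℝ, 0 ≤ c → ∀ x ∈ K₂, c • x ∈ K₂)
    (hK₂int : (interior K₂).Nonempty) (hK₂pt : K₂ ∩ (-K₂) = {(0 : V₂)})
    (Kt : Set W) (hKtcl : IsClosed Kt) (hKtconv : Convex ℝ Kt)
    (hKtcone : ∀ c : ℝ, 0 ≤ c → ∀ x ∈ Kt, c • x ∈ Kt)
    (hKt₁ : tensorCone tmul K₁ K₂ ⊆ Kt)
    (hKt₂ : Kt ⊆ dualSet (tensorCone tmul (dualSet K₁) (dualSet K₂)))
    (A₁ : V₁ →L[ℝ] V₁) (hA₁ : ∀ x ∈ K₁, A₁ x ∈ K₁)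
    (A₂ : V₂ →L[ℝ] V₂) (hA₂ : ∀ x ∈ K₂, A₂ x ∈ K₂)
    (x₀₁ y₀₁ : V₁) (hmix₁ : IsMixingWith K₁ A₁ x₀₁ y₀₁)
    (x₀₂ y₀₂ : V₂) (hmix₂ : IsMixingWith K₂ A₂ x₀₂ y₀₂)
    (B : W →L[ℝ] W) (hB : ∀ (a : V₁) (b : V₂), B (tmul a b) = tmul (A₁ a) (A₂ b))
    (hBpos : ∀ z ∈ Kt, B z ∈ Kt) :
    specRad B = specRad A₁ * specRad A₂ ∧
      IsMixingWith Kt B (tmul x₀₁ x₀₂) (tmul y₀₁ y₀₂) :=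
  stmt_7_general tmul hinner hspan K₁ K₂ Kt hKt₁ hKt₂ A₁ A₂ x₀₁ y₀₁ hmix₁ x₀₂ y₀₂ hmix₂ B hB
end

section
/- The map x ↦ ‖x‖_u := max{|⟨y,x⟩| : −u ≤ y ≤ u} is a norm on V, where the order y ≤ y′ means y′ − y ∈ K*. Moreover, if A is a DUP K-positive map, then ‖Ax‖_u ≤ ‖x‖_u for every x ∈ V. -/
/-!
An interior point `x₀` of `K`, with `closedBall x₀ ε ⊆ K`, gives `ε * ‖y‖ ≤ ⟪y, x₀⟫` for every `y`
in the dual cone; applied to `u - y` and `y + u` this bounds the order interval `[-u, u]` by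
`⟪u, x₀⟫ / ε`, so the supremum defining `‖·‖_u` is finite and behaves like a seminorm. Since `u` is
interior to `K*`, the interval contains a ball `closedBall 0 δ`, whence `δ * ‖x‖ ≤ ‖x‖_u` and
definiteness. Finally, the adjoint of a `K`-positive map preserves `K*` and fixes `u`, so it maps
`[-u, u]` into itself, and `⟪y, A x⟫ = ⟪A* y, x⟫` gives the contraction.
-/

open Filter Topology RealInnerProductSpace

variable {V : Type*} [NormedAddCommGroup V] [InnerProductSpace ℝ V] [FiniteDimensional ℝ V]

/-- The `u`-norm: the supremum of `|⟪y, x⟫|` over `-u ≤ y ≤ u` in the dual-cone order. -/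
noncomputable def unorm (K : Set V) (u : V) (x : V) : ℝ :=
  sSup {r : ℝ | ∃ y : V, u - y ∈ dualSet K ∧ y + u ∈ dualSet K ∧ r = |⟪y, x⟫|}

section UNorm

omit [FiniteDimensional ℝ V]

variable {K : Set V} {u : V}

theorem mul_norm_le_inner_of_mem_dualSet {x₀ : V} {ε : ℝ} (hε : 0 ≤ ε)
    (hball : Metric.closedBall x₀ ε ⊆ K) {y : V} (hy : y ∈ dualSet K) :
    ε * ‖y‖ ≤ ⟪y, x₀⟫ := by
  rcases eq_or_ne y 0 with rfl | hy0
  · simp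
  have hn : 0 < ‖y‖ := norm_pos_iff.mpr hy0
  have hmem : x₀ - (ε / ‖y‖) • y ∈ K := by
    apply hball
    rw [Metric.mem_closedBall, dist_eq_norm, sub_sub_cancel_left, norm_neg, norm_smul,
      Real.norm_eq_abs, abs_of_nonneg (by positivity), div_mul_cancel₀ _ hn.ne']
  have := hy _ hmem
  rw [inner_sub_right, real_inner_smul_right, real_inner_self_eq_norm_sq] at this
  have hsq : ε / ‖y‖ * ‖y‖ ^ 2 = ε * ‖y‖ := by field_simp
  linarith

theorem exists_norm_le_of_sub_mem_dualSet_of_add_mem_dualSet (hK : (interior K).Nonempty) :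
    ∃ C, ∀ y, u - y ∈ dualSet K → y + u ∈ dualSet K → ‖y‖ ≤ C := by
  obtain ⟨x₀, hx₀⟩ := hK
  obtain ⟨ε, hε, hball⟩ :=
    Metric.nhds_basis_closedBall.mem_iff.mp (mem_interior_iff_mem_nhds.mp hx₀)
  refine ⟨⟪u, x₀⟫ / ε, fun y h₁ h₂ => (le_div_iff₀ hε).mpr ?_⟩
  have hsub := mul_norm_le_inner_of_mem_dualSet hε.le hball h₁
  have hadd := mul_norm_le_inner_of_mem_dualSet hε.le hball h₂
  have hnorm : 2 * ‖y‖ ≤ ‖y + u‖ + ‖u - y‖ :=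
    calc 2 * ‖y‖ = ‖(y + u) - (u - y)‖ := by
          rw [show (y + u) - (u - y) = (2 : ℝ) • y by module, norm_smul, Real.norm_two]
      _ ≤ ‖y + u‖ + ‖u - y‖ := norm_sub_le _ _
  rw [inner_sub_left] at hsub
  rw [inner_add_left] at hadd
  linarith [mul_le_mul_of_nonneg_left hnorm hε.le]

theorem unorm_nonneg (x : V) : 0 ≤ unorm K u x :=
  Real.sSup_nonneg <| by rintro _ ⟨y, -, -, rfl⟩; exact abs_nonneg _

theorem unorm_le {x : V} {c : ℝ} (hc : 0 ≤ c)
    (h : ∀ y, u - y ∈ dualSet K → y + u ∈ dualSet K → |⟪y, x⟫| ≤ c) : unorm K u x ≤ c :=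
  Real.sSup_le (by rintro _ ⟨y, h₁, h₂, rfl⟩; exact h y h₁ h₂) hc

theorem unorm_zero : unorm K u 0 = 0 :=
  (unorm_le le_rfl fun _ _ _ => by simp).antisymm (unorm_nonneg 0)

theorem abs_inner_le_unorm (hK : (interior K).Nonempty) {x y : V} (h₁ : u - y ∈ dualSet K)
    (h₂ : y + u ∈ dualSet K) : |⟪y, x⟫| ≤ unorm K u x := by
  obtain ⟨C, hC⟩ := exists_norm_le_of_sub_mem_dualSet_of_add_mem_dualSet (u := u) hK
  refine le_csSup ⟨C * ‖x‖, ?_⟩ ⟨y, h₁, h₂, rfl⟩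
  rintro _ ⟨z, hz₁, hz₂, rfl⟩
  exact (abs_real_inner_le_norm z x).trans
    (mul_le_mul_of_nonneg_right (hC z hz₁ hz₂) (norm_nonneg x))

theorem unorm_add_le (hK : (interior K).Nonempty) (x z : V) :
    unorm K u (x + z) ≤ unorm K u x + unorm K u z :=
  unorm_le (add_nonneg (unorm_nonneg x) (unorm_nonneg z)) fun y h₁ h₂ =>
    calc |⟪y, x + z⟫| = |⟪y, x⟫ + ⟪y, z⟫| := by rw [inner_add_right]
      _ ≤ |⟪y, x⟫| + |⟪y, z⟫| := abs_add_le _ _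
      _ ≤ unorm K u x + unorm K u z :=
        add_le_add (abs_inner_le_unorm hK h₁ h₂) (abs_inner_le_unorm hK h₁ h₂)

theorem unorm_smul_le (hK : (interior K).Nonempty) (c : ℝ) (x : V) :
    unorm K u (c • x) ≤ |c| * unorm K u x :=
  unorm_le (mul_nonneg (abs_nonneg c) (unorm_nonneg x)) fun y h₁ h₂ => by
    rw [real_inner_smul_right, abs_mul]
    exact mul_le_mul_of_nonneg_left (abs_inner_le_unorm hK h₁ h₂) (abs_nonneg c)

theorem unorm_smul (hK : (interior K).Nonempty) (c : ℝ) (x : V) :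
    unorm K u (c • x) = |c| * unorm K u x := by
  rcases eq_or_ne c 0 with rfl | hc
  · simpa using unorm_zero
  refine (unorm_smul_le hK c x).antisymm ?_
  have hinv := unorm_smul_le (u := u) hK c⁻¹ (c • x)
  rw [inv_smul_smul₀ hc, abs_inv] at hinv
  rwa [← le_inv_mul_iff₀ (abs_pos.mpr hc)]

theorem mul_norm_le_unorm (hK : (interior K).Nonempty) {δ : ℝ} (hδ : 0 ≤ δ)
    (hball : Metric.closedBall u δ ⊆ dualSet K) (x : V) : δ * ‖x‖ ≤ unorm K u x := by
  rcases eq_or_ne x 0 with rfl | hx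
  · simpa using unorm_nonneg 0
  have hn : 0 < ‖x‖ := norm_pos_iff.mpr hx
  set y := (δ / ‖x‖) • x
  have hy : ‖y‖ = δ := by
    rw [norm_smul, Real.norm_eq_abs, abs_of_nonneg (by positivity), div_mul_cancel₀ _ hn.ne']
  have h₁ : u - y ∈ dualSet K := hball (by simp [hy])
  have h₂ : y + u ∈ dualSet K := hball (by simp [hy])
  have hyx : ⟪y, x⟫ = δ * ‖x‖ := by
    rw [real_inner_smul_left, real_inner_self_eq_norm_sq]
    field_simp
  calc δ * ‖x‖ = |⟪y, x⟫| := by rw [hyx, abs_of_nonneg (by positivity)]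
    _ ≤ unorm K u x := abs_inner_le_unorm hK h₁ h₂

theorem unorm_eq_zero_iff (hK : (interior K).Nonempty) (hu : u ∈ interior (dualSet K)) {x : V} :
    unorm K u x = 0 ↔ x = 0 := by
  refine ⟨fun h => ?_, fun h => h ▸ unorm_zero⟩
  obtain ⟨δ, hδ, hball⟩ :=
    Metric.nhds_basis_closedBall.mem_iff.mp (mem_interior_iff_mem_nhds.mp hu)
  have := mul_norm_le_unorm hK hδ.le hball x
  rw [h] at this
  exact norm_le_zero_iff.mp (nonpos_of_mul_nonpos_right this hδ)

theorem adjoint_mem_dualSet [CompleteSpace V] {A : V →L[ℝ] V} (hA : ∀ x ∈ K, A x ∈ K) {y : V}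
    (hy : y ∈ dualSet K) : ContinuousLinearMap.adjoint A y ∈ dualSet K := fun x hx => by
  rw [ContinuousLinearMap.adjoint_inner_left]
  exact hy _ (hA x hx)

theorem unorm_apply_le [CompleteSpace V] (hK : (interior K).Nonempty) {A : V →L[ℝ] V}
    (hA : ∀ x ∈ K, A x ∈ K) (hAu : ContinuousLinearMap.adjoint A u = u) (x : V) :
    unorm K u (A x) ≤ unorm K u x :=
  unorm_le (unorm_nonneg x) fun y h₁ h₂ => by
    rw [← ContinuousLinearMap.adjoint_inner_left]
    refine abs_inner_le_unorm hK ?_ ?_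
    · simpa [hAu] using adjoint_mem_dualSet hA h₁
    · simpa [hAu] using adjoint_mem_dualSet hA h₂

end UNorm

theorem stmt_11_general (K : Set V)
    (hKint : (interior K).Nonempty)
    (u : V) (hu : u ∈ interior (dualSet K)) :
    (∀ x : V, 0 ≤ unorm K u x) ∧
    (∀ x : V, unorm K u x = 0 ↔ x = 0) ∧
    (∀ (c : ℝ) (x : V), unorm K u (c • x) = |c| * unorm K u x) ∧
    (∀ x y : V, unorm K u (x + y) ≤ unorm K u x + unorm K u y) ∧
    (∀ A : V →L[ℝ] V, (∀ x ∈ K, A x ∈ K) → ContinuousLinearMap.adjoint A u = u →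
      ∀ x : V, unorm K u (A x) ≤ unorm K u x) :=
  ⟨unorm_nonneg, fun _ => unorm_eq_zero_iff hKint hu, unorm_smul hKint, unorm_add_le hKint,
    fun _ hA hAu => unorm_apply_le hKint hA hAu⟩

theorem stmt_11 (K : Set V) (hKcl : IsClosed K) (hKconv : Convex ℝ K)
    (hKcone : ∀ c : ℝ, 0 ≤ c → ∀ x ∈ K, c • x ∈ K)
    (hKint : (interior K).Nonempty) (hKpt : K ∩ (-K) = {(0 : V)})
    (u : V) (hu : u ∈ interior (dualSet K)) :
    (∀ x : V, 0 ≤ unorm K u x) ∧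
    (∀ x : V, unorm K u x = 0 ↔ x = 0) ∧
    (∀ (c : ℝ) (x : V), unorm K u (c • x) = |c| * unorm K u x) ∧
    (∀ x y : V, unorm K u (x + y) ≤ unorm K u x + unorm K u y) ∧
    (∀ A : V →L[ℝ] V, (∀ x ∈ K, A x ∈ K) → ContinuousLinearMap.adjoint A u = u →
      ∀ x : V, unorm K u (A x) ≤ unorm K u x) :=
  stmt_11_general K hKint u hu
end

section
/- A K-positive map A satisfies: for every x ∈ K∖{0} there exists t > 0 with e^{tA}x ∈ K°, if and only if for all nonzero extremal vectors x of K and y of K* there exists a nonnegative integer n with ⟨y, Aⁿx⟩ > 0. -/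
open Filter Topology RealInnerProductSpace

variable {V : Type*} [NormedAddCommGroup V] [InnerProductSpace ℝ V] [FiniteDimensional ℝ V]

/-- `x` is an extremal vector of the cone `K`. -/
def IsExtremalVec (K : Set V) (x : V) : Prop :=
  x ∈ K ∧ ∀ x₁ x₂ : V, x₁ ∈ K → x₂ ∈ K → x = x₁ + x₂ →
    (∃ c : ℝ, x₁ = c • x) ∧ (∃ c : ℝ, x₂ = c • x)

/-!
(⇒) For `y ∈ K*` nonzero, `⟪y, e^{tA} x⟫ = ∑ tⁿ/n! ⟪y, Aⁿ x⟫` is positive when `e^{tA} x` is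
interior to `K`, so one of its terms is.

(⇐) It suffices to find, for all nonzero `x ∈ K` and `y ∈ K*`, some `n` with `⟪y, Aⁿ x⟫ > 0`:
then `⟪y, e^A x⟫ > 0` for every nonzero `y ∈ K*`, which puts `e^A x` in the interior of `K`.
If `⟪y, Aⁿ x⟫ = 0` for all `n`, the `w ∈ K` with `⟪y, Aⁿ w⟫ = 0` for all `n` form a face of `K`
containing `x`, and a nonzero extremal vector `v` of this face is extremal in `K`. In the same way
the `z ∈ K*` with `⟪z, Aⁿ v⟫ = 0` for all `n` form a face of `K*` containing `y`, and a nonzero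
extremal vector `w` of it violates the hypothesis for the pair `v, w`. Faces have nonzero extremal
vectors because a point `e` interior to the dual cone cuts out a compact base `{⟪·, e⟫ = 1}` of
the cone, whose extreme points span extremal rays.
-/

section DualCone

variable {C : Set V}

omit [FiniteDimensional ℝ V] in
theorem isClosed_dualSet (C : Set V) : IsClosed (dualSet C) := by
  have hC : dualSet C = ⋂ x ∈ C, {y | 0 ≤ ⟪y, x⟫} := by
    ext y
    simp [dualSet]
  rw [hC]
  exact isClosed_biInter fun x _ =>
    isClosed_le continuous_const (continuous_id.inner continuous_const)

omit [FiniteDimensional ℝ V] in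
theorem convex_dualSet (C : Set V) : Convex ℝ (dualSet C) := by
  intro y₁ h₁ y₂ h₂ a b ha hb _ x hx
  rw [inner_add_left, real_inner_smul_left, real_inner_smul_left]
  exact add_nonneg (mul_nonneg ha (h₁ x hx)) (mul_nonneg hb (h₂ x hx))

omit [FiniteDimensional ℝ V] in
theorem smul_mem_dualSet (c : ℝ) (hc : 0 ≤ c) (y : V) (hy : y ∈ dualSet C) :
    c • y ∈ dualSet C := fun x hx => by
  rw [real_inner_smul_left]
  exact mul_nonneg hc (hy x hx)

omit [FiniteDimensional ℝ V] in
theorem mem_dualSet_dualSet {x : V} (hx : x ∈ C) : x ∈ dualSet (dualSet C) :=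
  fun y hy => real_inner_comm x y ▸ hy x hx

omit [FiniteDimensional ℝ V] in
/-- A functional bounded above on a cone is nonpositive on it. -/
theorem neg_toDual_symm_mem_dualSet [CompleteSpace V]
    (hcone : ∀ c : ℝ, 0 ≤ c → ∀ x ∈ C, c • x ∈ C) {f : StrongDual ℝ V} {u : ℝ}
    (hf : ∀ a ∈ C, f a ≤ u) : -(InnerProductSpace.toDual ℝ V).symm f ∈ dualSet C := by
  intro a ha
  rw [inner_neg_left, InnerProductSpace.toDual_symm_apply, neg_nonneg]
  by_contra! hfa
  have hscaled := hf _ (hcone ((|u| + 1) / f a) (by positivity) a ha)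
  rw [map_smul, smul_eq_mul, div_mul_cancel₀ _ hfa.ne'] at hscaled
  linarith [le_abs_self u]

omit [FiniteDimensional ℝ V] in
theorem dualSet_dualSet_subset [CompleteSpace V] (hcl : IsClosed C) (hconv : Convex ℝ C)
    (hcone : ∀ c : ℝ, 0 ≤ c → ∀ x ∈ C, c • x ∈ C) (h0 : (0 : V) ∈ C) :
    dualSet (dualSet C) ⊆ C := by
  intro x hx
  by_contra hxC
  obtain ⟨f, u, hfC, hfx⟩ := geometric_hahn_banach_closed_point hconv hcl hxC
  have hy := hx _ (neg_toDual_symm_mem_dualSet hcone fun a ha => (hfC a ha).le)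
  rw [real_inner_comm, inner_neg_left, InnerProductSpace.toDual_symm_apply] at hy
  linarith [hfC 0 h0, map_zero f]

omit [FiniteDimensional ℝ V] in
theorem exists_mul_norm_le_inner_of_mem_interior {e : V} (he : e ∈ interior C) :
    ∃ δ > 0, ∀ y ∈ dualSet C, δ * ‖y‖ ≤ ⟪y, e⟫ := by
  obtain ⟨δ, hδ, hball⟩ :=
    Metric.nhds_basis_closedBall.mem_iff.mp (mem_interior_iff_mem_nhds.mp he)
  refine ⟨δ, hδ, fun y hy => ?_⟩
  rcases eq_or_ne y 0 with rfl | hy0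
  · simp
  have hny : 0 < ‖y‖ := norm_pos_iff.mpr hy0
  have hmem : e - (δ / ‖y‖) • y ∈ C := hball <| by
    rw [Metric.mem_closedBall, dist_eq_norm, sub_sub_cancel_left, norm_neg, norm_smul,
      Real.norm_of_nonneg (by positivity), div_mul_cancel₀ _ hny.ne']
  have hinner := hy _ hmem
  rw [inner_sub_right, real_inner_smul_right, real_inner_self_eq_norm_mul_norm] at hinner
  field_simp at hinner
  nlinarith

omit [FiniteDimensional ℝ V] in
theorem inner_pos_of_mem_interior {y z : V} (hy : y ∈ dualSet C) (hy0 : y ≠ 0)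
    (hz : z ∈ interior C) : 0 < ⟪y, z⟫ := by
  obtain ⟨δ, hδ, hδz⟩ := exists_mul_norm_le_inner_of_mem_interior hz
  exact (mul_pos hδ (norm_pos_iff.mpr hy0)).trans_le (hδz y hy)

omit [FiniteDimensional ℝ V] in
theorem mem_interior_of_forall_inner_pos [CompleteSpace V] (hconv : Convex ℝ C)
    (hcone : ∀ c : ℝ, 0 ≤ c → ∀ x ∈ C, c • x ∈ C) (hint : (interior C).Nonempty) {z : V}
    (h : ∀ y ∈ dualSet C, y ≠ 0 → 0 < ⟪y, z⟫) : z ∈ interior C := by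
  by_contra hz
  obtain ⟨f, hf0, hfz⟩ := geometric_hahn_banach_of_nonempty_interior_point hconv hz hint
  have hy := neg_toDual_symm_mem_dualSet hcone hfz
  have hy0 : -(InnerProductSpace.toDual ℝ V).symm f ≠ 0 := by simpa using hf0
  have hpos := h _ hy hy0
  obtain ⟨b, hb⟩ := hint
  have h0 : (0 : V) ∈ C := by simpa using hcone 0 le_rfl b (interior_subset hb)
  rw [inner_neg_left, InnerProductSpace.toDual_symm_apply] at hpos
  linarith [hfz 0 h0, map_zero f]

theorem interior_dualSet_nonempty (hcl : IsClosed C) (hconv : Convex ℝ C)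
    (hcone : ∀ c : ℝ, 0 ≤ c → ∀ x ∈ C, c • x ∈ C) (h0 : (0 : V) ∈ C)
    (hpt : C ∩ -C = {0}) : (interior (dualSet C)).Nonempty := by
  have h0D : (0 : V) ∈ dualSet C := fun x _ => by simp
  by_contra hint
  rw [(convex_dualSet C).interior_nonempty_iff_affineSpan_eq_top,
    AffineSubspace.affineSpan_eq_top_iff_vectorSpan_eq_top_of_nonempty ℝ V V ⟨0, h0D⟩,
    ← Submodule.orthogonal_eq_bot_iff] at hint
  obtain ⟨u, hu, hu0⟩ := Submodule.exists_mem_ne_zero_of_ne_bot hint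
  have huD : ∀ y ∈ dualSet C, ⟪u, y⟫ = 0 := fun y hy =>
    (Submodule.mem_orthogonal' _ u).mp hu y (by simpa using vsub_mem_vectorSpan ℝ hy h0D)
  have hmem : ∀ v : V, (∀ y ∈ dualSet C, ⟪v, y⟫ = 0) → v ∈ C := fun v hv =>
    dualSet_dualSet_subset hcl hconv hcone h0 fun y hy => (hv y hy).symm ▸ le_rfl
  have hneg : -u ∈ C := hmem (-u) fun y hy => by rw [inner_neg_left, huD y hy, neg_zero]
  exact hu0 (hpt.subset ⟨hmem u huD, Set.mem_neg.mpr hneg⟩)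

end DualCone

section Extremal

variable {F : Set V} {e : V} {δ : ℝ}

omit [FiniteDimensional ℝ V] in
theorem isExtremalVec_of_mem_extremePoints (hcone : ∀ c : ℝ, 0 ≤ c → ∀ x ∈ F, c • x ∈ F)
    (hδ : 0 < δ) (he : ∀ x ∈ F, δ * ‖x‖ ≤ ⟪x, e⟫) {v : V}
    (hv : v ∈ (F ∩ {x | ⟪x, e⟫ = 1}).extremePoints ℝ) : IsExtremalVec F v := by
  obtain ⟨⟨hvF, hve⟩, hvext⟩ := mem_extremePoints.mp hv
  have hnonneg : ∀ x ∈ F, 0 ≤ ⟪x, e⟫ := fun x hx =>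
    (mul_nonneg hδ.le (norm_nonneg x)).trans (he x hx)
  have heq_zero : ∀ x ∈ F, ⟪x, e⟫ = 0 → x = 0 := fun x hx hx0 =>
    norm_le_zero_iff.mp <| nonpos_of_mul_nonpos_right (hx0 ▸ he x hx) hδ
  have hbase : ∀ x ∈ F, 0 < ⟪x, e⟫ → ⟪x, e⟫⁻¹ • x ∈ F ∩ {x | ⟪x, e⟫ = 1} := fun x hx hpos =>
    ⟨hcone _ (inv_nonneg.mpr hpos.le) x hx, by simp [real_inner_smul_left, hpos.ne']⟩
  have hsummand : ∀ x₁ x₂, x₁ ∈ F → x₂ ∈ F → v = x₁ + x₂ → x₁ = ⟪x₁, e⟫ • v := by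
    intro x₁ x₂ h₁ h₂ hsum
    have hweights : ⟪x₁, e⟫ + ⟪x₂, e⟫ = 1 := by rw [← inner_add_left, ← hsum, hve]
    rcases (hnonneg x₁ h₁).eq_or_lt with ha₁ | ha₁
    · rw [heq_zero x₁ h₁ ha₁.symm, inner_zero_left, zero_smul]
    rcases (hnonneg x₂ h₂).eq_or_lt with ha₂ | ha₂
    · rw [heq_zero x₂ h₂ ha₂.symm, add_zero] at hsum
      rw [← hsum, hve, one_smul]
    have hseg : v ∈ openSegment ℝ (⟪x₁, e⟫⁻¹ • x₁) (⟪x₂, e⟫⁻¹ • x₂) :=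
      ⟨_, _, ha₁, ha₂, hweights, by
        rw [smul_smul, smul_smul, mul_inv_cancel₀ ha₁.ne', mul_inv_cancel₀ ha₂.ne', one_smul,
          one_smul, hsum]⟩
    rw [← (hvext _ (hbase x₁ h₁ ha₁) _ (hbase x₂ h₂ ha₂) hseg).1, smul_smul,
      mul_inv_cancel₀ ha₁.ne', one_smul]
  exact ⟨hvF, fun x₁ x₂ h₁ h₂ hsum => ⟨⟨_, hsummand x₁ x₂ h₁ h₂ hsum⟩,
    ⟨_, hsummand x₂ x₁ h₂ h₁ (hsum.trans (add_comm x₁ x₂))⟩⟩⟩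

theorem exists_isExtremalVec_ne_zero (hcl : IsClosed F)
    (hcone : ∀ c : ℝ, 0 ≤ c → ∀ x ∈ F, c • x ∈ F) (hδ : 0 < δ)
    (he : ∀ x ∈ F, δ * ‖x‖ ≤ ⟪x, e⟫) {x : V} (hx : x ∈ F) (hx0 : x ≠ 0) :
    ∃ v, IsExtremalVec F v ∧ v ≠ 0 := by
  set B := F ∩ {x | ⟪x, e⟫ = 1}
  have hpos : 0 < ⟪x, e⟫ := (mul_pos hδ (norm_pos_iff.mpr hx0)).trans_le (he x hx)
  have hBne : B.Nonempty := ⟨⟪x, e⟫⁻¹ • x, hcone _ (inv_nonneg.mpr hpos.le) x hx, by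
    simp [real_inner_smul_left, hpos.ne']⟩
  have hBbdd : B ⊆ Metric.closedBall 0 (1 / δ) := by
    rintro w ⟨hwF, hwe : ⟪w, e⟫ = 1⟩
    rw [mem_closedBall_zero_iff, le_div_iff₀' hδ, ← hwe]
    exact he w hwF
  have hBcpt : IsCompact B :=
    Metric.isCompact_of_isClosed_isBounded
      (hcl.inter (isClosed_eq (continuous_id.inner continuous_const) continuous_const))
      (Metric.isBounded_closedBall.subset hBbdd)
  obtain ⟨v, hv⟩ := hBcpt.extremePoints_nonempty hBne
  refine ⟨v, isExtremalVec_of_mem_extremePoints hcone hδ he hv, fun hv0 => ?_⟩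
  simpa [hv0] using hv.1.2

theorem exists_isExtremalVec_ne_zero_of_forall_eq_zero {ι : Type*} (hcl : IsClosed F)
    (hcone : ∀ c : ℝ, 0 ≤ c → ∀ x ∈ F, c • x ∈ F) (hδ : 0 < δ)
    (he : ∀ x ∈ F, δ * ‖x‖ ≤ ⟪x, e⟫) (φ : ι → V →L[ℝ] ℝ) (hφ : ∀ i, ∀ x ∈ F, 0 ≤ φ i x)
    {x : V} (hx : x ∈ F) (hx0 : x ≠ 0) (hφx : ∀ i, φ i x = 0) :
    ∃ v, IsExtremalVec F v ∧ v ≠ 0 ∧ ∀ i, φ i v = 0 := by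
  set S : Submodule ℝ V := ⨅ i, LinearMap.ker (φ i : V →ₗ[ℝ] ℝ)
  have hmemS : ∀ w, w ∈ S ↔ ∀ i, φ i w = 0 := by simp [S, Submodule.mem_iInf]
  obtain ⟨v, ⟨hvFS, hvext⟩, hv0⟩ := exists_isExtremalVec_ne_zero (F := F ∩ S)
    (hcl.inter S.closed_of_finiteDimensional)
    (fun c hc w hw => ⟨hcone c hc w hw.1, S.smul_mem c hw.2⟩) hδ (fun w hw => he w hw.1)
    ⟨hx, (hmemS x).mpr hφx⟩ hx0
  have hvφ := (hmemS v).mp hvFS.2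
  -- `F ∩ S` is a face of `F`: the `φ i ≥ 0` vanish on both summands of a sum in it
  have hface : ∀ x₁ x₂, x₁ ∈ F → x₂ ∈ F → v = x₁ + x₂ → x₁ ∈ S := fun x₁ x₂ h₁ h₂ hsum =>
    (hmemS x₁).mpr fun i => by
      have hvi := hvφ i
      rw [hsum, map_add] at hvi
      linarith [hφ i x₁ h₁, hφ i x₂ h₂]
  refine ⟨v, ⟨hvFS.1, fun x₁ x₂ h₁ h₂ hsum => hvext x₁ x₂ ⟨h₁, hface x₁ x₂ h₁ h₂ hsum⟩
    ⟨h₂, hface x₂ x₁ h₂ h₁ (hsum.trans (add_comm x₁ x₂))⟩ hsum⟩, hv0, hvφ⟩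

end Extremal

omit [FiniteDimensional ℝ V] in
theorem pow_apply_mem {K : Set V} {A : V →L[ℝ] V} (hA : ∀ x ∈ K, A x ∈ K) (n : ℕ) {x : V}
    (hx : x ∈ K) : (A ^ n) x ∈ K := by
  rw [FunLike.coe_pow_eq_iterate]
  exact Set.MapsTo.iterate hA n hx

omit [FiniteDimensional ℝ V] in
theorem hasSum_inner_exp_smul_apply [CompleteSpace V] (A : V →L[ℝ] V) (t : ℝ) (x y : V) :
    HasSum (fun n : ℕ => ((n.factorial : ℝ)⁻¹ * t ^ n) * ⟪y, (A ^ n) x⟫)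
      ⟪y, NormedSpace.exp (t • A) x⟫ := by
  have h := (NormedSpace.exp_series_hasSum_exp' (𝕂 := ℝ) (t • A)).mapL
    ((innerSL ℝ y).comp (ContinuousLinearMap.apply ℝ V x))
  simpa [smul_pow, smul_smul, real_inner_smul_right] using h

theorem exists_inner_pow_apply_pos_of_forall_extremal {K : Set V} (hKcl : IsClosed K)
    (hKconv : Convex ℝ K) (hKcone : ∀ c : ℝ, 0 ≤ c → ∀ x ∈ K, c • x ∈ K)
    (hKint : (interior K).Nonempty) (hKpt : K ∩ (-K) = {(0 : V)}) {A : V →L[ℝ] V}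
    (hA : ∀ x ∈ K, A x ∈ K)
    (hext : ∀ x y : V, IsExtremalVec K x → x ≠ 0 → IsExtremalVec (dualSet K) y → y ≠ 0 →
      ∃ n : ℕ, 0 < ⟪y, (A ^ n) x⟫)
    {x y : V} (hx : x ∈ K) (hx0 : x ≠ 0) (hy : y ∈ dualSet K) (hy0 : y ≠ 0) :
    ∃ n : ℕ, 0 < ⟪y, (A ^ n) x⟫ := by
  obtain ⟨b, hb⟩ := hKint
  have h0 : (0 : V) ∈ K := by simpa using hKcone 0 le_rfl b (interior_subset hb)
  obtain ⟨e, he⟩ := interior_dualSet_nonempty hKcl hKconv hKcone h0 hKpt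
  obtain ⟨δ, hδ, hδe⟩ := exists_mul_norm_le_inner_of_mem_interior he
  obtain ⟨δ', hδ', hδb⟩ := exists_mul_norm_le_inner_of_mem_interior hb
  by_contra! hn
  obtain ⟨v, hv, hv0, hyv⟩ := exists_isExtremalVec_ne_zero_of_forall_eq_zero hKcl hKcone hδ
    (fun w hw => hδe w (mem_dualSet_dualSet hw)) (fun n => innerSL ℝ y ∘L A ^ n)
    (fun n w hw => hy _ (pow_apply_mem hA n hw)) hx hx0
    (fun n => le_antisymm (hn n) (hy _ (pow_apply_mem hA n hx)))
  obtain ⟨w, hw, hw0, hwv⟩ := exists_isExtremalVec_ne_zero_of_forall_eq_zero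
    (isClosed_dualSet K) smul_mem_dualSet hδ' hδb (fun n => innerSL ℝ ((A ^ n) v))
    (fun n z hz => by simpa [real_inner_comm] using hz _ (pow_apply_mem hA n hv.1)) hy hy0
    (fun n => by simpa [real_inner_comm] using hyv n)
  obtain ⟨n, hn⟩ := hext v w hv hv0 hw hw0
  exact hn.ne' ((real_inner_comm _ _).trans (hwv n))

theorem stmt_14 (K : Set V) (hKcl : IsClosed K) (hKconv : Convex ℝ K)
    (hKcone : ∀ c : ℝ, 0 ≤ c → ∀ x ∈ K, c • x ∈ K)
    (hKint : (interior K).Nonempty) (hKpt : K ∩ (-K) = {(0 : V)})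
    (A : V →L[ℝ] V) (hA : ∀ x ∈ K, A x ∈ K) :
    (∀ x ∈ K, x ≠ 0 → ∃ t : ℝ, 0 < t ∧ NormedSpace.exp (t • A) x ∈ interior K) ↔
      (∀ x y : V, IsExtremalVec K x → x ≠ 0 → IsExtremalVec (dualSet K) y → y ≠ 0 →
        ∃ n : ℕ, 0 < ⟪y, (A ^ n) x⟫) := by
  constructor
  · intro hint x y hx hx0 hy hy0
    obtain ⟨t, -, hxt⟩ := hint x hx.1 hx0
    by_contra! hn
    have hzero : ∀ n : ℕ, ⟪y, (A ^ n) x⟫ = 0 :=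
      fun n => le_antisymm (hn n) (hy.1 _ (pow_apply_mem hA n hx.1))
    have hsum := hasSum_inner_exp_smul_apply A t x y
    simp only [hzero, mul_zero] at hsum
    exact (inner_pos_of_mem_interior hy.1 hy0 hxt).ne' (hsum.unique hasSum_zero)
  · intro hext x hx hx0
    refine ⟨1, one_pos, mem_interior_of_forall_inner_pos hKconv hKcone hKint fun y hy hy0 => ?_⟩
    obtain ⟨n, hn⟩ := exists_inner_pow_apply_pos_of_forall_extremal hKcl hKconv hKcone hKint
      hKpt hA hext hx hx0 hy hy0
    refine lt_of_lt_of_le ?_ (le_hasSum (hasSum_inner_exp_smul_apply A 1 x y) n fun j _ =>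
      mul_nonneg (by positivity) (hy _ (pow_apply_mem hA j hx)))
    exact mul_pos (by positivity) hn
end

section
/- Let Ω be a nonempty finite set, A_ω a K-positive map and a_ω > 0 for each ω ∈ Ω. If A = ∑_ω A_ω is K-irreducible, then A_a = ∑_ω a_ω A_ω is K-irreducible. -/
open Filter Topology RealInnerProductSpace

variable {V : Type*} [NormedAddCommGroup V] [InnerProductSpace ℝ V] [FiniteDimensional ℝ V]

/-- `K`-irreducibility, via the characterization: `Bx ≤ αx` for nonzero `x ∈ K` forces
`x` to be interior. -/
def IrredCond (K : Set V) (B : V →L[ℝ] V) : Prop :=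
  ∀ x ∈ K, x ≠ 0 → ∀ α : ℝ, 0 ≤ α → α • x - B x ∈ K → x ∈ interior K

section Cone

variable {E : Type*} [AddCommGroup E] [Module ℝ E] {K : Set E}

theorem add_mem_of_convex_of_smul_mem (hKconv : Convex ℝ K)
    (hKcone : ∀ c : ℝ, 0 ≤ c → ∀ x ∈ K, c • x ∈ K) {u v : E} (hu : u ∈ K) (hv : v ∈ K) :
    u + v ∈ K := by
  have hmid : (2⁻¹ : ℝ) • u + (2⁻¹ : ℝ) • v ∈ K :=
    hKconv hu hv (by norm_num) (by norm_num) (by norm_num)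
  convert hKcone 2 zero_le_two _ hmid using 1
  rw [smul_add, smul_inv_smul₀ two_ne_zero, smul_inv_smul₀ two_ne_zero]

theorem sum_smul_mem_of_convex_of_smul_mem (hKconv : Convex ℝ K)
    (hKcone : ∀ c : ℝ, 0 ≤ c → ∀ x ∈ K, c • x ∈ K) {ι : Type*} (s : Finset ι)
    {c : ι → ℝ} (hc : ∀ i, 0 ≤ c i) {x : ι → E} (hx : ∀ i, x i ∈ K) (hK : K.Nonempty) :
    ∑ i ∈ s, c i • x i ∈ K := by
  obtain ⟨y, hy⟩ := hK
  have hzero : (0 : E) ∈ K := by simpa using hKcone 0 le_rfl y hy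
  exact Finset.sum_induction _ (· ∈ K) (fun _ _ ↦ add_mem_of_convex_of_smul_mem hKconv hKcone)
    hzero fun i _ ↦ hKcone _ (hc i) _ (hx i)

end Cone

theorem exists_pos_le_of_forall_pos {ι : Type*} [Finite ι] {a : ι → ℝ} (ha : ∀ i, 0 < a i) :
    ∃ c > 0, ∀ i, c ≤ a i := by
  cases isEmpty_or_nonempty ι
  · exact ⟨1, one_pos, isEmptyElim⟩
  · obtain ⟨i, hi⟩ := Finite.exists_min a
    exact ⟨a i, ha i, hi⟩

/-- `Bx ≤ αx` together with `c • C ≤ B` gives `Cx ≤ (α / c) x`. -/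
theorem IrredCond.of_sub_smul_mem {E : Type*} [NormedAddCommGroup E] [InnerProductSpace ℝ E]
    {K : Set E} (hKconv : Convex ℝ K)
    (hKcone : ∀ c : ℝ, 0 ≤ c → ∀ x ∈ K, c • x ∈ K) {B C : E →L[ℝ] E} {c : ℝ} (hc : 0 < c)
    (hBC : ∀ x ∈ K, B x - c • C x ∈ K) (hC : IrredCond K C) : IrredCond K B := by
  intro x hx hne α hα hBx
  refine hC x hx hne (α / c) (by positivity) ?_
  have hdecomp : (α / c) • x - C x = c⁻¹ • ((α • x - B x) + (B x - c • C x)) := by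
    rw [sub_add_sub_cancel, smul_sub, smul_smul, inv_smul_smul₀ hc.ne', div_eq_inv_mul]
  rw [hdecomp]
  exact hKcone _ (inv_nonneg.2 hc.le) _
    (add_mem_of_convex_of_smul_mem hKconv hKcone hBx (hBC x hx))

theorem stmt_15_general (K : Set V) (hKconv : Convex ℝ K)
    (hKcone : ∀ c : ℝ, 0 ≤ c → ∀ x ∈ K, c • x ∈ K)
    (Ω : Type*) [Fintype Ω]
    (A : Ω → (V →L[ℝ] V)) (hA : ∀ ω, ∀ x ∈ K, A ω x ∈ K)
    (a : Ω → ℝ) (ha : ∀ ω, 0 < a ω)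
    (hirr : IrredCond K (∑ ω, A ω)) :
    IrredCond K (∑ ω, a ω • A ω) := by
  obtain ⟨c, hc, hca⟩ := exists_pos_le_of_forall_pos ha
  refine hirr.of_sub_smul_mem hKconv hKcone hc fun x hx ↦ ?_
  have hdiff : (∑ ω, a ω • A ω) x - c • (∑ ω, A ω) x = ∑ ω, (a ω - c) • A ω x := by
    simp only [sum_apply, smul_apply, Finset.smul_sum, sub_smul, Finset.sum_sub_distrib]
  rw [hdiff]
  exact sum_smul_mem_of_convex_of_smul_mem hKconv hKcone _ (fun ω ↦ sub_nonneg.2 (hca ω))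
    (fun ω ↦ hA ω x hx) ⟨x, hx⟩

theorem stmt_15 (K : Set V) (hKcl : IsClosed K) (hKconv : Convex ℝ K)
    (hKcone : ∀ c : ℝ, 0 ≤ c → ∀ x ∈ K, c • x ∈ K)
    (hKint : (interior K).Nonempty) (hKpt : K ∩ (-K) = {(0 : V)})
    (Ω : Type*) [Fintype Ω] [Nonempty Ω]
    (A : Ω → (V →L[ℝ] V)) (hA : ∀ ω, ∀ x ∈ K, A ω x ∈ K)
    (a : Ω → ℝ) (ha : ∀ ω, 0 < a ω)
    (hirr : IrredCond K (∑ ω, A ω)) :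
    IrredCond K (∑ ω, a ω • A ω) :=
  stmt_15_general K hKconv hKcone Ω A hA a ha hirr
end
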